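/- Let R be a commutative ring and G a finite group whose order is invertible in R, acting on a commutative R-algebra B by R-algebra automorphisms; let A = B^G be the subalgebra of G-invariant elements. Then for every commutative R-algebra R', letting G act on R' ⊗_R B through its action on B, the natural map R' ⊗_R A → (R' ⊗_R B)^G is an isomorphism of R'-algebras. -/

import Mathlib

/-!
Since `|G|` is invertible, the Reynolds operator `b ↦ |G|⁻¹ ∑ g • b` is an `R`-linear projection
of `B` onto `B^G`. Being linear, it survives any base change: `R' ⊗ B^G` is a direct summand of
`R' ⊗ B`, and the Reynolds operator of `R' ⊗ B` is the base change of that of `B`, so its image,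
the `G`-invariants of `R' ⊗ B`, is the image of `R' ⊗ B^G`.
-/

open scoped TensorProduct

/-- The subalgebra of `G`-invariant elements of an `R`-algebra `B` on which a
group `G` acts by `R`-algebra automorphisms. -/
def fixedSubalgebra (G R B : Type*) [Monoid G] [CommSemiring R] [Semiring B]
    [Algebra R B] [MulSemiringAction G B] [SMulCommClass G R B] :
    Subalgebra R B where
  carrier := MulAction.fixedPoints G B
  mul_mem' := fun {x y} hx hy g => by
    rw [smul_mul', hx g, hy g]
  add_mem' := fun {x y} hx hy g => by
    rw [smul_add, hx g, hy g]
  algebraMap_mem' := fun r g => smul_algebraMap g r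


namespace LinearMap

variable {R M P N : Type*} [CommSemiring R] [AddCommMonoid M] [AddCommMonoid P]
  [AddCommMonoid N] [Module R M] [Module R P] [Module R N]

theorem lTensor_injective_of_leftInverse {f : M →ₗ[R] P} {g : P →ₗ[R] M}
    (h : Function.LeftInverse g f) : Function.Injective (f.lTensor N) :=
  Function.LeftInverse.injective (g := g.lTensor N) fun x => by
    rw [← comp_apply, ← lTensor_comp, show g ∘ₗ f = id from ext h, lTensor_id, id_apply]

end LinearMap

namespace Representation

variable {k G V : Type*} [CommRing k] [Group G] [AddCommGroup V] [Module k V]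
  (ρ : Representation k G V) (N : Type*) [AddCommGroup N] [Module k N]

theorem trivial_tprod_apply (g : G) : (trivial k G N).tprod ρ g = (ρ g).lTensor N := rfl

variable [Fintype G] [Invertible (Fintype.card G : k)]

theorem averageMap_eq_smul_sum : ρ.averageMap = ⅟(Fintype.card G : k) • ∑ g : G, ρ g := by
  simp [GroupAlgebra.average, map_sum]

theorem averageMap_trivial_tprod :
    ((trivial k G N).tprod ρ).averageMap = ρ.averageMap.lTensor N := by
  rw [averageMap_eq_smul_sum, averageMap_eq_smul_sum, LinearMap.lTensor_smul,
    ← LinearMap.coe_lTensorHom, map_sum]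
  rfl

theorem lTensor_invariants_subtype_injective :
    Function.Injective (ρ.invariants.subtype.lTensor N) :=
  LinearMap.lTensor_injective_of_leftInverse ρ.isProj_averageMap.codRestrict_apply_cod

theorem range_lTensor_invariants_subtype :
    LinearMap.range (ρ.invariants.subtype.lTensor N) = ((trivial k G N).tprod ρ).invariants := by
  ext x
  constructor
  · rintro ⟨y, rfl⟩ g
    rw [trivial_tprod_apply, ← LinearMap.comp_apply, ← LinearMap.lTensor_comp]
    congr 2
    ext v
    exact v.2 g
  · intro hx
    refine ⟨ρ.isProj_averageMap.codRestrict.lTensor N x, ?_⟩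
    have hfactor : ρ.invariants.subtype ∘ₗ ρ.isProj_averageMap.codRestrict = ρ.averageMap :=
      LinearMap.ext ρ.isProj_averageMap.codRestrict_apply
    rw [← LinearMap.comp_apply, ← LinearMap.lTensor_comp, hfactor, ← averageMap_trivial_tprod,
      averageMap_id _ _ hx]

end Representation

/-- Let `G` be a finite group whose order is invertible in the commutative ring
`R`, acting on a commutative `R`-algebra `B` by `R`-algebra automorphisms, and let
`A = B^G`.  Then for every commutative `R`-algebra `R'`, the natural
`R'`-algebra homomorphism `R' ⊗[R] A → R' ⊗[R] B` is injective with image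
exactly the `G`-invariants of `R' ⊗[R] B` (where `G` acts through `B`); that is,
`R' ⊗[R] A → (R' ⊗[R] B)^G` is an isomorphism of `R'`-algebras. -/
theorem stmt_14 {R : Type*} [CommRing R] (G : Type*) [Group G] [Finite G]
    (hord : IsUnit (Nat.card G : R))
    (B : Type*) [CommRing B] [Algebra R B] [MulSemiringAction G B]
    [SMulCommClass G R B]
    (R' : Type*) [CommRing R'] [Algebra R R'] :
    Function.Injective
      (Algebra.TensorProduct.map (AlgHom.id R' R') (fixedSubalgebra G R B).val) ∧
    Set.range
      (Algebra.TensorProduct.map (AlgHom.id R' R') (fixedSubalgebra G R B).val) =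
      {x : R' ⊗[R] B | ∀ g : G,
        LinearMap.lTensor R' (DistribMulAction.toLinearMap R B g) x = x} := by
  have := Fintype.ofFinite G
  have : Invertible (Fintype.card G : R) := (Nat.card_eq_fintype_card (α := G) ▸ hord).invertible
  let ρ := Representation.ofDistribMulAction R G B
  -- `fixedSubalgebra G R B` is definitionally `ρ.invariants`, and
  -- `Algebra.TensorProduct.map (AlgHom.id R' R') f` is definitionally `f.lTensor R'`.
  exact ⟨ρ.lTensor_invariants_subtype_injective R',
    congrArg SetLike.coe (ρ.range_lTensor_invariants_subtype R')⟩
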